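/- Let v be a maximal monotone map on ℝ^d that equals the identity outside closure(Ω) for a bounded set Ω. Then for any fixed a ∈ ℝ^d, lim_{|x| → ∞} c_v(a,x)/|x| = √2. -/

import Mathlib

/-- A set-valued map on `ℝ^d` is monotone. -/
def MonotoneSetMap {d : ℕ} (v : EuclideanSpace ℝ (Fin d) → Set (EuclideanSpace ℝ (Fin d))) :
    Prop :=
  ∀ x₁ x₂ y₁ y₂, y₁ ∈ v x₁ → y₂ ∈ v x₂ → 0 ≤ (inner ℝ (y₁ - y₂) (x₁ - x₂) : ℝ)

/-- Maximal monotone set-valued map with full domain. -/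
def MaxMonotone {d : ℕ} (v : EuclideanSpace ℝ (Fin d) → Set (EuclideanSpace ℝ (Fin d))) :
    Prop :=
  MonotoneSetMap v ∧ (∀ x, (v x).Nonempty) ∧
    ∀ w : EuclideanSpace ℝ (Fin d) → Set (EuclideanSpace ℝ (Fin d)),
      MonotoneSetMap w → (∀ x, v x ⊆ w x) → w = v

/-- `ℓ_v(a,b) := inf { √(2⟨b' − a', b − a⟩) : a' ∈ v(a), b' ∈ v(b) }`. -/
noncomputable def ellV {d : ℕ} (v : EuclideanSpace ℝ (Fin d) → Set (EuclideanSpace ℝ (Fin d)))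
    (a b : EuclideanSpace ℝ (Fin d)) : ℝ :=
  sInf {r : ℝ | ∃ a' ∈ v a, ∃ b' ∈ v b, r = Real.sqrt (2 * (inner ℝ (b' - a') (b - a) : ℝ))}

/-- `c_v(a,b)`: infimum over finite chains joining `a` to `b` of the sums of `ℓ_v`. -/
noncomputable def costV {d : ℕ} (v : EuclideanSpace ℝ (Fin d) → Set (EuclideanSpace ℝ (Fin d)))
    (a b : EuclideanSpace ℝ (Fin d)) : ℝ :=
  sInf {r : ℝ | ∃ (N : ℕ) (x : ℕ → EuclideanSpace ℝ (Fin d)), 0 < N ∧ x 0 = a ∧ x N = b ∧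
    r = ∑ i ∈ Finset.range N, ellV v (x i) (x (i+1))}

/-!
Outside a ball `closedBall 0 R` containing `Ω`, `v` is the identity, and monotonicity forces
`v` to map the ball into itself. Hence a single chain step from `a` to `x` already costs at most
`√2 ‖x‖ + O(1)`. Conversely each step of any chain costs at least the increment of
`√2 · max (‖·‖ - 3R) 0`, so every chain costs at least `√2 ‖x‖ - O(1)`.
-/

open Filter Topology Bornology

section Cost

variable {d : ℕ} {v : EuclideanSpace ℝ (Fin d) → Set (EuclideanSpace ℝ (Fin d))}

lemma ellV_nonneg (x y : EuclideanSpace ℝ (Fin d)) : 0 ≤ ellV v x y :=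
  Real.sInf_nonneg <| by
    rintro r ⟨x', -, y', -, rfl⟩
    exact Real.sqrt_nonneg _

lemma ellV_le {x y x' y' : EuclideanSpace ℝ (Fin d)} (hx' : x' ∈ v x) (hy' : y' ∈ v y) :
    ellV v x y ≤ Real.sqrt (2 * inner ℝ (y' - x') (y - x)) := by
  refine csInf_le ⟨0, ?_⟩ ⟨x', hx', y', hy', rfl⟩
  rintro r ⟨x'', -, y'', -, rfl⟩
  exact Real.sqrt_nonneg _

lemma le_ellV {x y : EuclideanSpace ℝ (Fin d)} {c : ℝ} (hx : (v x).Nonempty)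
    (hy : (v y).Nonempty)
    (h : ∀ x' ∈ v x, ∀ y' ∈ v y, c ≤ Real.sqrt (2 * inner ℝ (y' - x') (y - x))) :
    c ≤ ellV v x y := by
  obtain ⟨x', hx'⟩ := hx
  obtain ⟨y', hy'⟩ := hy
  refine le_csInf ⟨_, x', hx', y', hy', rfl⟩ ?_
  rintro r ⟨x'', hx'', y'', hy'', rfl⟩
  exact h x'' hx'' y'' hy''

lemma ellV_mem_chainCosts (a b : EuclideanSpace ℝ (Fin d)) :
    ellV v a b ∈ {r : ℝ | ∃ (N : ℕ) (x : ℕ → EuclideanSpace ℝ (Fin d)), 0 < N ∧ x 0 = a ∧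
      x N = b ∧ r = ∑ i ∈ Finset.range N, ellV v (x i) (x (i+1))} :=
  ⟨1, fun i => if i = 0 then a else b, one_pos, by simp, by simp, by simp⟩

lemma costV_le_ellV (a b : EuclideanSpace ℝ (Fin d)) : costV v a b ≤ ellV v a b := by
  refine csInf_le ⟨0, ?_⟩ (ellV_mem_chainCosts a b)
  rintro r ⟨N, x, -, -, -, rfl⟩
  exact Finset.sum_nonneg fun i _ => ellV_nonneg _ _

lemma sub_le_costV (g : EuclideanSpace ℝ (Fin d) → ℝ) (hg : ∀ x y, g y - g x ≤ ellV v x y)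
    (a b : EuclideanSpace ℝ (Fin d)) : g b - g a ≤ costV v a b := by
  refine le_csInf ⟨_, ellV_mem_chainCosts a b⟩ ?_
  rintro r ⟨N, x, -, rfl, rfl, rfl⟩
  calc g (x N) - g (x 0) = ∑ i ∈ Finset.range N, (g (x (i + 1)) - g (x i)) :=
        (Finset.sum_range_sub (fun i => g (x i)) N).symm
    _ ≤ _ := Finset.sum_le_sum fun i _ => hg _ _

lemma costV_le_of_mem {a a' b : EuclideanSpace ℝ (Fin d)} (ha' : a' ∈ v a) (hb : b ∈ v b) :
    costV v a b ≤ Real.sqrt 2 * (‖b‖ + ‖a‖ + ‖a'‖) := by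
  have hinner : inner ℝ (b - a') (b - a) ≤ (‖b‖ + ‖a‖ + ‖a'‖) ^ 2 := by
    have h₁ := norm_sub_le b a'
    have h₂ := norm_sub_le b a
    nlinarith [real_inner_le_norm (b - a') (b - a), norm_nonneg (b - a'), norm_nonneg (b - a),
      norm_nonneg a, norm_nonneg a', norm_nonneg b]
  calc costV v a b ≤ ellV v a b := costV_le_ellV a b
    _ ≤ Real.sqrt (2 * inner ℝ (b - a') (b - a)) := ellV_le ha' hb
    _ ≤ Real.sqrt 2 * (‖b‖ + ‖a‖ + ‖a'‖) := by
      rw [Real.sqrt_le_iff, mul_pow, Real.sq_sqrt zero_le_two]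
      exact ⟨by positivity, by linarith⟩

end Cost

namespace MonotoneSetMap

variable {d : ℕ} {v : EuclideanSpace ℝ (Fin d) → Set (EuclideanSpace ℝ (Fin d))}

-- Test monotonicity against the fixed point `k • x'`, where `k < 1` but `k ‖x'‖ > max ‖x‖ R`.
lemma norm_le_max_of_mem (hmono : MonotoneSetMap v) {R : ℝ}
    (hid : ∀ z : EuclideanSpace ℝ (Fin d), R < ‖z‖ → v z = {z})
    {x x' : EuclideanSpace ℝ (Fin d)} (hx' : x' ∈ v x) : ‖x'‖ ≤ max ‖x‖ R := by
  by_contra! hlt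
  set m := max ‖x‖ R
  set s := ‖x'‖
  have hs : 0 < s := (norm_nonneg x).trans_lt ((le_max_left _ _).trans_lt hlt)
  set k := (m + s) / (2 * s)
  have hks : k * s = (m + s) / 2 := by simp only [k]; field_simp
  have hk : k < 1 := by rw [div_lt_one (by positivity)]; linarith
  have hz : v (k • x') = {k • x'} := by
    refine hid _ ?_
    rw [norm_smul, Real.norm_of_nonneg (by positivity), hks]
    linarith [le_max_right ‖x‖ R]
  have hmon := hmono x (k • x') x' (k • x') hx' (by rw [hz]; rfl)
  have hxx' : inner ℝ x' x ≤ s * m := by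
    nlinarith [real_inner_le_norm x' x, le_max_left ‖x‖ R]
  have hexpand : inner ℝ (x' - k • x') (x - k • x') = (1 - k) * (inner ℝ x' x - k * s ^ 2) := by
    rw [show x' - k • x' = (1 - k) • x' by rw [sub_smul, one_smul], real_inner_smul_left,
      inner_sub_right, real_inner_smul_right, real_inner_self_eq_norm_sq]
  rw [hexpand] at hmon
  nlinarith [mul_pos (sub_pos.mpr hk) hs]

lemma sqrt_two_mul_sub_le_ellV (hmono : MonotoneSetMap v) (hne : ∀ x, (v x).Nonempty)
    {R : ℝ} (hR : 0 ≤ R) (hid : ∀ z : EuclideanSpace ℝ (Fin d), R < ‖z‖ → v z = {z})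
    (x y : EuclideanSpace ℝ (Fin d)) :
    Real.sqrt 2 * max (‖y‖ - 3 * R) 0 - Real.sqrt 2 * max (‖x‖ - 3 * R) 0 ≤ ellV v x y := by
  refine le_ellV (hne x) (hne y) fun x' hx' y' hy' => ?_
  rw [← mul_sub]
  set t := max (‖y‖ - 3 * R) 0 - max (‖x‖ - 3 * R) 0
  rcases le_or_gt t 0 with ht | ht
  · exact (mul_nonpos_of_nonneg_of_nonpos (Real.sqrt_nonneg 2) ht).trans (Real.sqrt_nonneg _)
  have hy : 3 * R < ‖y‖ := by
    by_contra! h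
    have := max_le (sub_nonpos.mpr h) le_rfl
    linarith [le_max_right (‖x‖ - 3 * R) 0]
  have ht_le : t ≤ ‖y‖ - 3 * R - max (‖x‖ - 3 * R) 0 := by
    simp only [t, max_eq_left (sub_nonneg.mpr hy.le), le_refl]
  obtain rfl : y = y' := by rwa [hid y (by linarith), Set.mem_singleton_iff, eq_comm] at hy'
  rw [Real.le_sqrt (by positivity) (by nlinarith [hmono y x y x' hy' hx']), mul_pow,
    Real.sq_sqrt zero_le_two]
  gcongr
  rcases le_or_gt ‖x‖ R with hx | hx
  -- `⟨y - x', y - x⟩ ≥ ‖y‖² - 2R‖y‖ - R² ≥ (‖y‖ - 3R)²` once `‖x‖, ‖x'‖ ≤ R ≤ ‖y‖ / 3`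
  · have hx'R : ‖x'‖ ≤ R := (hmono.norm_le_max_of_mem hid hx').trans (max_eq_right hx).le
    have hfx : max (‖x‖ - 3 * R) 0 = 0 := max_eq_right (by linarith)
    have hexpand : inner ℝ (y - x') (y - x) =
        ‖y‖ ^ 2 - inner ℝ y x - inner ℝ x' y + inner ℝ x' x := by
      simp only [inner_sub_left, inner_sub_right, real_inner_self_eq_norm_sq]
      ring
    rw [hexpand]
    nlinarith [real_inner_le_norm y x, real_inner_le_norm x' y, neg_abs_le (inner ℝ x' x),
      abs_real_inner_le_norm x' x, norm_nonneg x, norm_nonneg x', norm_nonneg y,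
      mul_le_mul hx hx'R (norm_nonneg x') hR]
  · obtain rfl : x = x' := by rwa [hid x hx, Set.mem_singleton_iff, eq_comm] at hx'
    rw [real_inner_self_eq_norm_sq]
    have : t ≤ ‖y - x‖ := by
      linarith [norm_sub_norm_le y x, le_max_left (‖x‖ - 3 * R) 0]
    nlinarith

end MonotoneSetMap

lemma tendsto_div_norm_cobounded {E : Type*} [NormedAddCommGroup E] {f : E → ℝ} {c C : ℝ}
    (h : ∀ᶠ x in cobounded E, |f x - c * ‖x‖| ≤ C) :
    Tendsto (fun x => f x / ‖x‖) (cobounded E) (𝓝 c) := by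
  have hpos : ∀ᶠ x in cobounded E, 0 < ‖x‖ :=
    tendsto_norm_cobounded_atTop.eventually (eventually_gt_atTop 0)
  have hdecay : Tendsto (fun x : E => C / ‖x‖) (cobounded E) (𝓝 0) := by
    simpa [div_eq_mul_inv] using tendsto_norm_cobounded_atTop.inv_tendsto_atTop.const_mul C
  have hsub : Tendsto (fun x => f x / ‖x‖ - c) (cobounded E) (𝓝 0) := by
    refine squeeze_zero_norm' ?_ hdecay
    filter_upwards [h, hpos] with x hx hx0
    rw [Real.norm_eq_abs, div_sub' hx0.ne', abs_div, abs_of_pos hx0, mul_comm]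
    gcongr
  simpa using hsub.add_const c

theorem stmt16 {d : ℕ} (Ω : Set (EuclideanSpace ℝ (Fin d))) (hΩb : Bornology.IsBounded Ω)
    (v : EuclideanSpace ℝ (Fin d) → Set (EuclideanSpace ℝ (Fin d)))
    (hv : MaxMonotone v) (hid : ∀ x ∉ closure Ω, v x = {x})
    (a : EuclideanSpace ℝ (Fin d)) :
    Filter.Tendsto (fun x : EuclideanSpace ℝ (Fin d) => costV v a x / ‖x‖)
      (Bornology.cobounded (EuclideanSpace ℝ (Fin d))) (nhds (Real.sqrt 2)) := by
  obtain ⟨hmono, hne, -⟩ := hv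
  obtain ⟨r, hr⟩ := hΩb.closure.subset_closedBall 0
  set R := max r 0
  have hR : 0 ≤ R := le_max_right r 0
  have hidR : ∀ z : EuclideanSpace ℝ (Fin d), R < ‖z‖ → v z = {z} := fun z hz =>
    hid z fun hzΩ => by
      have := mem_closedBall_zero_iff.mp (hr hzΩ)
      linarith [le_max_left r 0]
  obtain ⟨a', ha'⟩ := hne a
  refine tendsto_div_norm_cobounded (C := Real.sqrt 2 * (3 * R + ‖a‖ + ‖a'‖)) ?_
  filter_upwards [tendsto_norm_cobounded_atTop.eventually (eventually_gt_atTop R)] with x hx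
  have upper := costV_le_of_mem ha' (by rw [hidR x hx]; rfl : x ∈ v x)
  have lower := sub_le_costV _ (hmono.sqrt_two_mul_sub_le_ellV hne hR hidR) a x
  have hmax : max (‖a‖ - 3 * R) 0 ≤ ‖a‖ := max_le (by linarith) (norm_nonneg a)
  have hsqrt2 := Real.sqrt_nonneg 2
  rw [abs_le]
  constructor <;>
    nlinarith [le_max_left (‖x‖ - 3 * R) 0, mul_le_mul_of_nonneg_left hmax hsqrt2,
      mul_le_mul_of_nonneg_left (le_max_left (‖x‖ - 3 * R) 0) hsqrt2, norm_nonneg a']
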